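/- With R = V ⊗ |⊥⟩⟨⊤| + V† ⊗ |⊤⟩⟨⊥| and P_± = (I ± R)/2 on H ⊗ ℂ², for any unit vector φ ∈ H: measuring the state φ ⊗ |⊤⟩ with the projective measurement {P_⊤, P_⊥} followed by the projective measurement onto the second factor basis {|⊤⟩, |⊥⟩} yields the state (Vφ) ⊗ |⊥⟩ with probability 1/2 and the state φ ⊗ |⊤⟩ with probability 1/2. -/

import Mathlib

open Matrix Kronecker

/-!
`R` maps `ψ = φ ⊗ |⊤⟩` to `(Vφ) ⊗ |⊥⟩`, a unit vector orthogonal to `ψ`, so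
`P± ψ = (ψ ± Rψ) / 2` is an equal-weight superposition of two orthonormal vectors. The second
measurement fixes one of them and annihilates the other, which splits the superposition into
its two halves, each carrying probability `1/2`.
-/

namespace Matrix

section KroneckerVec

variable {R l m n p : Type*}

def kroneckerVec [Mul R] (x : m → R) (y : n → R) : m × n → R := fun i => x i.1 * y i.2

variable [CommSemiring R] [Fintype m] [Fintype n]

theorem kronecker_mulVec_kroneckerVec (A : Matrix l m R) (B : Matrix p n R) (x : m → R)
    (y : n → R) : (A ⊗ₖ B) *ᵥ kroneckerVec x y = kroneckerVec (A *ᵥ x) (B *ᵥ y) := by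
  ext ⟨i, k⟩
  simp only [kroneckerVec, mulVec, dotProduct, kroneckerMap_apply, Fintype.sum_prod_type,
    Finset.sum_mul_sum]
  exact Finset.sum_congr rfl fun _ _ => Finset.sum_congr rfl fun _ _ => by ring

theorem star_kroneckerVec_dotProduct [StarRing R] (x x' : m → R) (y y' : n → R) :
    star (kroneckerVec x y) ⬝ᵥ kroneckerVec x' y' = (star x ⬝ᵥ x') * (star y ⬝ᵥ y') := by
  simp only [kroneckerVec, dotProduct, Pi.star_apply, star_mul', Fintype.sum_prod_type,
    Finset.sum_mul_sum]
  exact Finset.sum_congr rfl fun _ _ => Finset.sum_congr rfl fun _ _ => by ring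

theorem kronecker_single_mulVec_kroneckerVec_single [DecidableEq n] [DecidableEq p]
    (A : Matrix l m R) (i : p) (j k : n) (x : m → R) :
    (A ⊗ₖ single i j 1) *ᵥ kroneckerVec x (Pi.single k 1) =
      if j = k then kroneckerVec (A *ᵥ x) (Pi.single i 1) else 0 := by
  rw [kronecker_mulVec_kroneckerVec, single_mulVec, one_mul]
  split_ifs with h
  · subst h
    simp [Pi.single]
  · ext
    simp [kroneckerVec, Ne.symm h]

end KroneckerVec

theorem star_mulVec_dotProduct_mulVec_of_mem_unitaryGroup {n 𝕜 : Type*} [Fintype n]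
    [DecidableEq n] [CommRing 𝕜] [StarRing 𝕜] {U : Matrix n n 𝕜} (hU : U ∈ unitaryGroup n 𝕜)
    (x y : n → 𝕜) : star (U *ᵥ x) ⬝ᵥ U *ᵥ y = star x ⬝ᵥ y := by
  rw [star_mulVec, dotProduct_mulVec, vecMul_vecMul, ← star_eq_conjTranspose,
    mem_unitaryGroup_iff'.mp hU, vecMul_one]

end Matrix

section EqualSuperposition

variable {n : Type*}

theorem sqrt_half_inv_smul_half_smul (v : n → ℂ) :
    ((√(1 / 2) : ℝ) : ℂ)⁻¹ • (1 / 2 : ℂ) • v = ((√(1 / 2) : ℝ) : ℂ) • v := by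
  have h : (√(1 / 2) : ℝ)⁻¹ * (1 / 2) = √(1 / 2) := by
    field_simp
    rw [Real.sq_sqrt (by norm_num)]
    norm_num
  rw [smul_smul, ← Complex.ofReal_inv, ← Complex.ofReal_ofNat, ← Complex.ofReal_one,
    ← Complex.ofReal_div, ← Complex.ofReal_mul, h]

theorem measure_equal_superposition [Fintype n] {ψ t : n → ℂ} {Q₁ Q₂ : Matrix n n ℂ}
    (hψ : star ψ ⬝ᵥ ψ = 1) (ht : star t ⬝ᵥ t = 1) (hψt : star ψ ⬝ᵥ t = 0)
    (hQ₁ψ : Q₁ *ᵥ ψ = ψ) (hQ₁t : Q₁ *ᵥ t = 0) (hQ₂ψ : Q₂ *ᵥ ψ = 0) (hQ₂t : Q₂ *ᵥ t = t)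
    (ε : ℂ) (hε : ‖ε‖ = 1) :
    let s : ℂ := ((√(1 / 2) : ℝ) : ℂ)
    let post := s⁻¹ • (1 / 2 : ℂ) • (ψ + ε • t)
    star post ⬝ᵥ Q₁ *ᵥ post = 1 / 2 ∧ star post ⬝ᵥ Q₂ *ᵥ post = 1 / 2 ∧
      s⁻¹ • Q₁ *ᵥ post = ψ ∧ s⁻¹ • Q₂ *ᵥ post = ε • t := by
  intro s post
  have hs : s ≠ 0 := by simp [s]
  have hss : star s * s = 1 / 2 := by
    rw [Complex.star_def, Complex.conj_ofReal, ← Complex.ofReal_mul,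
      Real.mul_self_sqrt (by norm_num)]
    norm_num
  have hεε : star ε * ε = 1 := by rw [Complex.star_def, Complex.conj_mul', hε]; norm_num
  have htψ : star t ⬝ᵥ ψ = 0 := by rw [star_dotProduct, hψt, star_zero]
  have hQ₁u : Q₁ *ᵥ (ψ + ε • t) = ψ := by
    rw [mulVec_add, mulVec_smul, hQ₁ψ, hQ₁t, smul_zero, add_zero]
  have hQ₂u : Q₂ *ᵥ (ψ + ε • t) = ε • t := by rw [mulVec_add, mulVec_smul, hQ₂ψ, hQ₂t, zero_add]
  have hu₁ : star (ψ + ε • t) ⬝ᵥ ψ = 1 := by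
    rw [star_add, add_dotProduct, star_smul, smul_dotProduct, hψ, htψ, smul_zero, add_zero]
  have hu₂ : star (ψ + ε • t) ⬝ᵥ ε • t = 1 := by
    rw [star_add, add_dotProduct, star_smul, smul_dotProduct, dotProduct_smul, dotProduct_smul,
      hψt, ht, smul_zero, zero_add, smul_smul, smul_eq_mul, mul_one, hεε]
  have hpost : post = s • (ψ + ε • t) := sqrt_half_inv_smul_half_smul _
  have hprob (w : n → ℂ) :
      star (s • (ψ + ε • t)) ⬝ᵥ s • w = 1 / 2 * (star (ψ + ε • t) ⬝ᵥ w) := by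
    rw [star_smul, smul_dotProduct, dotProduct_smul, smul_smul, smul_eq_mul, hss]
  rw [hpost, mulVec_smul, mulVec_smul, hQ₁u, hQ₂u, hprob, hprob, hu₁, hu₂, mul_one]
  exact ⟨rfl, rfl, inv_smul_smul₀ hs _, inv_smul_smul₀ hs _⟩

end EqualSuperposition

/-- With `R = V ⊗ |⊥⟩⟨⊤| + Vᴴ ⊗ |⊤⟩⟨⊥|` and `P± = (1 ± R)/2` on `H ⊗ ℂ²`,
measuring `φ ⊗ |⊤⟩` (for a unit vector `φ`) with `{P⊤, P⊥}` followed by the projective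
measurement `{1 ⊗ |⊤⟩⟨⊤|, 1 ⊗ |⊥⟩⟨⊥|}` on the second factor yields, whatever the first
outcome (each of probability `1/2`), the state `(Vφ) ⊗ |⊥⟩` with conditional probability
`1/2` (up to a global phase — exactly for the first branch), and the state `φ ⊗ |⊤⟩` with
conditional probability `1/2` (exactly). Here `|⊤⟩ = e₀`, `|⊥⟩ = e₁`. -/
theorem measurement_based_unitary_step {ι : Type*} [Fintype ι] [DecidableEq ι]
    (V : Matrix ι ι ℂ) (hV : V ∈ Matrix.unitaryGroup ι ℂ)
    (φ : ι → ℂ) (hφ : star φ ⬝ᵥ φ = 1) :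
    let ketT : Fin 2 → ℂ := fun k => if k = 0 then 1 else 0
    let ketB : Fin 2 → ℂ := fun k => if k = 1 then 1 else 0
    let R : Matrix (ι × Fin 2) (ι × Fin 2) ℂ :=
      V ⊗ₖ Matrix.single (1 : Fin 2) (0 : Fin 2) (1 : ℂ) +
      Vᴴ ⊗ₖ Matrix.single (0 : Fin 2) (1 : Fin 2) (1 : ℂ)
    let Pt : Matrix (ι × Fin 2) (ι × Fin 2) ℂ := ((1 : ℂ) / 2) • (1 + R)
    let Pb : Matrix (ι × Fin 2) (ι × Fin 2) ℂ := ((1 : ℂ) / 2) • (1 - R)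
    let Qt : Matrix (ι × Fin 2) (ι × Fin 2) ℂ :=
      (1 : Matrix ι ι ℂ) ⊗ₖ Matrix.single (0 : Fin 2) (0 : Fin 2) (1 : ℂ)
    let Qb : Matrix (ι × Fin 2) (ι × Fin 2) ℂ :=
      (1 : Matrix ι ι ℂ) ⊗ₖ Matrix.single (1 : Fin 2) (1 : Fin 2) (1 : ℂ)
    let ψ : ι × Fin 2 → ℂ := fun p => φ p.1 * ketT p.2
    let target : ι × Fin 2 → ℂ := fun p => V.mulVec φ p.1 * ketB p.2
    -- first measurement: each outcome has probability 1/2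
    (star ψ ⬝ᵥ Pt.mulVec ψ = 1 / 2) ∧ (star ψ ⬝ᵥ Pb.mulVec ψ = 1 / 2) ∧
    -- in each branch, normalized post-measurement states, second-stage probabilities and
    -- final states
    (∀ P ∈ ({Pt, Pb} : Set (Matrix (ι × Fin 2) (ι × Fin 2) ℂ)),
      let post : ι × Fin 2 → ℂ := (↑(Real.sqrt (1 / 2)) : ℂ)⁻¹ • P.mulVec ψ
      -- conditional probabilities of the second measurement are 1/2 each
      (star post ⬝ᵥ Qt.mulVec post = 1 / 2) ∧ (star post ⬝ᵥ Qb.mulVec post = 1 / 2) ∧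
      -- second outcome ⊤: the (normalized) final state is exactly φ ⊗ |⊤⟩
      ((↑(Real.sqrt (1 / 2)) : ℂ)⁻¹ • Qt.mulVec post = ψ) ∧
      -- second outcome ⊥: the (normalized) final state is (Vφ) ⊗ |⊥⟩ up to a global phase
      (∃ c : ℂ, ‖c‖ = 1 ∧ (↑(Real.sqrt (1 / 2)) : ℂ)⁻¹ • Qb.mulVec post = c • target)) ∧
    -- and for the first branch (first outcome ⊤) the ⊥-final state is exactly (Vφ) ⊗ |⊥⟩
    ((↑(Real.sqrt (1 / 2)) : ℂ)⁻¹ • Qb.mulVec ((↑(Real.sqrt (1 / 2)) : ℂ)⁻¹ • Pt.mulVec ψ)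
      = target) := by
  intro ketT ketB R Pt Pb Qt Qb ψ target
  have hψ : ψ = kroneckerVec φ (Pi.single 0 1) := by
    ext ⟨i, k⟩; fin_cases k <;> simp [ψ, ketT, kroneckerVec]
  have ht : target = kroneckerVec (V *ᵥ φ) (Pi.single 1 1) := by
    ext ⟨i, k⟩; fin_cases k <;> simp [target, ketB, kroneckerVec]
  have hψψ : star ψ ⬝ᵥ ψ = 1 := by simp [hψ, star_kroneckerVec_dotProduct, hφ]
  have htt : star target ⬝ᵥ target = 1 := by
    simp [ht, star_kroneckerVec_dotProduct, star_mulVec_dotProduct_mulVec_of_mem_unitaryGroup hV,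
      hφ]
  have hψt : star ψ ⬝ᵥ target = 0 := by simp [hψ, ht, star_kroneckerVec_dotProduct]
  have hRψ : R *ᵥ ψ = target := by
    simp [R, hψ, ht, add_mulVec, kronecker_single_mulVec_kroneckerVec_single]
  obtain ⟨hQtψ, hQtt, hQbψ, hQbt⟩ :
      Qt *ᵥ ψ = ψ ∧ Qt *ᵥ target = 0 ∧ Qb *ᵥ ψ = 0 ∧ Qb *ᵥ target = target := by
    simp [Qt, Qb, hψ, ht, kronecker_single_mulVec_kroneckerVec_single]
  have hPt : Pt *ᵥ ψ = (1 / 2 : ℂ) • (ψ + (1 : ℂ) • target) := by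
    rw [smul_mulVec, add_mulVec, one_mulVec, hRψ, one_smul]
  have hPb : Pb *ᵥ ψ = (1 / 2 : ℂ) • (ψ + (-1 : ℂ) • target) := by
    rw [smul_mulVec, sub_mulVec, one_mulVec, hRψ, neg_one_smul, sub_eq_add_neg]
  have branch := measure_equal_superposition hψψ htt hψt hQtψ hQtt hQbψ hQbt
  obtain ⟨hT₁, hT₂, hT₃, hT₄⟩ := branch 1 norm_one
  obtain ⟨hB₁, hB₂, hB₃, hB₄⟩ := branch (-1) (by simp)
  refine ⟨by simp [hPt, hψψ, hψt], by simp [hPb, hψψ, hψt], ?_, by rw [hPt, hT₄, one_smul]⟩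
  rintro P (rfl | rfl)
  · rw [hPt]
    exact ⟨hT₁, hT₂, hT₃, 1, norm_one, hT₄⟩
  · rw [hPb]
    exact ⟨hB₁, hB₂, hB₃, -1, by simp, hB₄⟩
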